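/- Let (Ω, 𝓕, P) be a probability space, A : Ω → ℝⁿˣⁿ measurable and essentially bounded, and (Āₖ)ₖ∈ℕ, (Ãₖ)ₖ∈ℕ sequences of measurable ℝⁿˣⁿ-valued random variables with ∑ₖ E|Āₖ|² < ∞ and ∑ₖ E|Ãₖ|² < ∞, so that 𝒜ξ = Aξ + ∑ₖ Āₖ E[Ãₖ ξ] defines a bounded linear operator on L²(Ω; ℝⁿ). Then the Hilbert-space adjoint of 𝒜 is given by 𝒜* y = Aᵀ y + ∑ₖ Ãₖᵀ E[Āₖᵀ y] for all y ∈ L²(Ω; ℝⁿ). -/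

import Mathlib

open MeasureTheory Filter
open scoped RealInnerProductSpace

/-- Matrix–vector multiplication, viewed as a map between Euclidean spaces. -/
noncomputable def matVec {n m : ℕ} (M : Matrix (Fin n) (Fin m) ℝ)
    (v : EuclideanSpace ℝ (Fin m)) : EuclideanSpace ℝ (Fin n) :=
  (WithLp.equiv 2 (Fin n → ℝ)).symm (M.mulVec ((WithLp.equiv 2 (Fin m → ℝ)) v))

/-- Square of the Frobenius norm of a real matrix. -/
def frobSq {n m : ℕ} (M : Matrix (Fin n) (Fin m) ℝ) : ℝ := ∑ i, ∑ j, (M i j) ^ 2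

/-- Frobenius norm of a real matrix. -/
noncomputable def frob {n m : ℕ} (M : Matrix (Fin n) (Fin m) ℝ) : ℝ :=
  Real.sqrt (frobSq M)

open scoped Matrix

/-!
Pairing `𝒜ξ` with `y` splits into `E⟨Aξ, y⟩ = E⟨ξ, Aᵀy⟩` and `E⟨∑ₖ Āₖ cₖ, y⟩` with the
deterministic vectors `cₖ = E[Ãₖ ξ]`. Since `∑ₖ |Āₖ(ω)|² < ∞` almost surely and
`∑ₖ |cₖ|² ≤ ∑ₖ E|Ãₖ|² · E|ξ|² < ∞`, the series `∑ₖ Āₖ(ω) cₖ` converges pointwise by Cauchy–Schwarz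
in `k`; and `∑ₖ E|⟨Āₖ cₖ, y⟩| ≤ ∑ₖ |cₖ| (E|Āₖ|²)^½ (E|y|²)^½ < ∞`, so the expectation may be
taken termwise, giving `∑ₖ ⟨E[Āₖᵀ y], cₖ⟩`. Expanding `E⟨ξ, 𝒜*y⟩` in the same way gives the
same series.
-/

section MatVec

variable {n m : ℕ}

lemma matVec_apply (M : Matrix (Fin n) (Fin m) ℝ) (v : EuclideanSpace ℝ (Fin m)) (i : Fin n) :
    matVec M v i = ∑ j, M i j * v j := rfl

lemma inner_matVec (M : Matrix (Fin n) (Fin m) ℝ) (x : EuclideanSpace ℝ (Fin m))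
    (v : EuclideanSpace ℝ (Fin n)) : ⟪matVec M x, v⟫ = ⟪x, matVec Mᵀ v⟫ := by
  simp only [PiLp.inner_apply, RCLike.inner_apply, conj_trivial, matVec_apply,
    Matrix.transpose_apply, Finset.sum_mul, Finset.mul_sum]
  rw [Finset.sum_comm]
  congr 1; ext i; congr 1; ext j; ring

lemma frobSq_nonneg (M : Matrix (Fin n) (Fin m) ℝ) : 0 ≤ frobSq M := by
  unfold frobSq
  positivity

lemma frob_sq (M : Matrix (Fin n) (Fin m) ℝ) : frob M ^ 2 = frobSq M :=
  Real.sq_sqrt (frobSq_nonneg M)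

lemma frobSq_transpose (M : Matrix (Fin n) (Fin m) ℝ) : frobSq Mᵀ = frobSq M :=
  Finset.sum_comm

lemma norm_matVec_le (M : Matrix (Fin n) (Fin m) ℝ) (v : EuclideanSpace ℝ (Fin m)) :
    ‖matVec M v‖ ≤ frob M * ‖v‖ := by
  rw [EuclideanSpace.norm_eq, frob, ← Real.sqrt_sq (norm_nonneg v),
    ← Real.sqrt_mul (frobSq_nonneg M), EuclideanSpace.norm_sq_eq, frobSq, Finset.sum_mul]
  refine Real.sqrt_le_sqrt (Finset.sum_le_sum fun i _ => ?_)
  simp only [matVec_apply, Real.norm_eq_abs, sq_abs]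
  exact Finset.sum_mul_sq_le_sq_mul_sq _ _ _

lemma continuous_matVec : Continuous (Function.uncurry (@matVec n m)) :=
  (PiLp.continuous_toLp 2 _).comp
    (continuous_fst.matrix_mulVec ((PiLp.continuous_ofLp 2 _).comp continuous_snd))

lemma continuous_frob : Continuous (@frob n m) := by
  unfold frob frobSq
  fun_prop

end MatVec

lemma summable_mul_of_summable_sq {ι : Type*} {a b : ι → ℝ} (ha : Summable fun k => a k ^ 2)
    (hb : Summable fun k => b k ^ 2) : Summable fun k => a k * b k :=
  Summable.of_norm_bounded ((ha.add hb).div_const 2) fun k => by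
    rw [Real.norm_eq_abs, abs_mul]
    nlinarith [sq_nonneg (|a k| - |b k|), sq_abs (a k), sq_abs (b k)]

section Integration

variable {Ω : Type*} [MeasurableSpace Ω] {P : Measure Ω}

lemma ae_summable_and_integrable_tsum {ι : Type*} [Countable ι] {f : ι → Ω → ℝ}
    (hf0 : ∀ k ω, 0 ≤ f k ω) (hf : ∀ k, Integrable (f k) P)
    (hsum : Summable fun k => ∫ ω, f k ω ∂P) :
    (∀ᵐ ω ∂P, Summable fun k => f k ω) ∧ Integrable (fun ω => ∑' k, f k ω) P := by
  have hmeas : ∀ k, AEMeasurable (fun ω => ENNReal.ofReal (f k ω)) P :=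
    fun k => (hf k).aestronglyMeasurable.aemeasurable.ennreal_ofReal
  have htoReal : ∀ k ω, (ENNReal.ofReal (f k ω)).toReal = f k ω :=
    fun k ω => ENNReal.toReal_ofReal (hf0 k ω)
  have hlint : ∫⁻ ω, ∑' k, ENNReal.ofReal (f k ω) ∂P ≠ ⊤ := by
    rw [lintegral_tsum hmeas]
    simp_rw [← ofReal_integral_eq_lintegral_ofReal (hf _) (ae_of_all _ (hf0 _)),
      ← ENNReal.ofReal_tsum_of_nonneg (fun k => integral_nonneg (hf0 k)) hsum]
    exact ENNReal.ofReal_ne_top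
  have hsummable : ∀ᵐ ω ∂P, Summable fun k => f k ω := by
    filter_upwards [ae_lt_top' (AEMeasurable.tsum hmeas) hlint] with ω hω
    simpa only [htoReal] using ENNReal.summable_toReal hω.ne
  refine ⟨hsummable, (integrable_toReal_of_lintegral_ne_top
    (AEMeasurable.tsum hmeas) hlint).congr ?_⟩
  filter_upwards with ω
  rw [ENNReal.tsum_toReal_eq fun k => ENNReal.ofReal_ne_top]
  simp only [htoReal]

lemma integrable_and_hasSum_integral_of_ae_hasSum {E : Type*} [NormedAddCommGroup E]
    [NormedSpace ℝ E] {F : ℕ → Ω → E} {f : Ω → E} (hF : ∀ k, Integrable (F k) P)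
    (hsum : Summable fun k => ∫ ω, ‖F k ω‖ ∂P)
    (hf : ∀ᵐ ω ∂P, HasSum (fun k => F k ω) (f ω)) :
    Integrable f P ∧ HasSum (fun k => ∫ ω, F k ω ∂P) (∫ ω, f ω ∂P) := by
  obtain ⟨hnorm_summable, hnorm_int⟩ :=
    ae_summable_and_integrable_tsum (fun _ _ => norm_nonneg _) (fun k => (hF k).norm) hsum
  refine ⟨hnorm_int.mono' ?_ ?_, hasSum_integral_of_dominated_convergence _
    (fun k => (hF k).aestronglyMeasurable) (fun k => ae_of_all _ fun _ => le_rfl)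
    hnorm_summable hnorm_int hf⟩
  · exact aestronglyMeasurable_of_tendsto_ae atTop
      (fun N => Finset.aestronglyMeasurable_fun_sum _ fun k _ => (hF k).aestronglyMeasurable)
      (hf.mono fun ω hω => hω.tendsto_sum_nat)
  · filter_upwards [hf, hnorm_summable] with ω hω hω'
    exact hω.tsum_eq ▸ norm_tsum_le_tsum_norm hω'

lemma integral_mul_le_sqrt_mul_sqrt {f g : Ω → ℝ} (hf : MemLp f 2 P) (hg : MemLp g 2 P)
    (hf0 : ∀ ω, 0 ≤ f ω) (hg0 : ∀ ω, 0 ≤ g ω) :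
    ∫ ω, f ω * g ω ∂P ≤ √(∫ ω, f ω ^ 2 ∂P) * √(∫ ω, g ω ^ 2 ∂P) := by
  have h2 : ENNReal.ofReal 2 = 2 := by simp
  have := integral_mul_le_Lp_mul_Lq_of_nonneg Real.HolderConjugate.two_two
    (ae_of_all _ hf0) (ae_of_all _ hg0) (h2 ▸ hf) (h2 ▸ hg)
  simpa only [Real.sqrt_eq_rpow, Real.rpow_two] using this

variable {n m : ℕ}

lemma aestronglyMeasurable_of_measurable_entries {B : Ω → Matrix (Fin n) (Fin m) ℝ}
    (hB : ∀ i j, Measurable fun ω => B ω i j) : AEStronglyMeasurable B P :=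
  (measurable_pi_lambda _ fun i => measurable_pi_lambda _ fun j => hB i j).aestronglyMeasurable

lemma MeasureTheory.AEStronglyMeasurable.matVec {B : Ω → Matrix (Fin n) (Fin m) ℝ}
    {x : Ω → EuclideanSpace ℝ (Fin m)} (hB : AEStronglyMeasurable B P)
    (hx : AEStronglyMeasurable x P) : AEStronglyMeasurable (fun ω => matVec (B ω) (x ω)) P :=
  continuous_matVec.comp_aestronglyMeasurable₂ hB hx

lemma memLp_frob {B : Ω → Matrix (Fin n) (Fin m) ℝ} (hB : AEStronglyMeasurable B P)
    (hBint : Integrable (fun ω => frobSq (B ω)) P) : MemLp (fun ω => frob (B ω)) 2 P :=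
  (memLp_two_iff_integrable_sq (continuous_frob.comp_aestronglyMeasurable hB)).mpr
    (by simpa only [frob_sq] using hBint)

lemma integrable_matVec {B : Ω → Matrix (Fin n) (Fin m) ℝ} {x : Ω → EuclideanSpace ℝ (Fin m)}
    (hB : AEStronglyMeasurable B P) (hBint : Integrable (fun ω => frobSq (B ω)) P)
    (hx : MemLp x 2 P) : Integrable (fun ω => matVec (B ω) (x ω)) P :=
  ((memLp_frob hB hBint).integrable_mul hx.norm).mono' (hB.matVec hx.aestronglyMeasurable)
    (ae_of_all _ fun _ => norm_matVec_le _ _)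

lemma integral_norm_matVec_le {B : Ω → Matrix (Fin n) (Fin m) ℝ}
    {x : Ω → EuclideanSpace ℝ (Fin m)} (hB : AEStronglyMeasurable B P)
    (hBint : Integrable (fun ω => frobSq (B ω)) P) (hx : MemLp x 2 P) :
    ∫ ω, ‖matVec (B ω) (x ω)‖ ∂P ≤ √(∫ ω, frobSq (B ω) ∂P) * √(∫ ω, ‖x ω‖ ^ 2 ∂P) :=
  calc ∫ ω, ‖matVec (B ω) (x ω)‖ ∂P ≤ ∫ ω, frob (B ω) * ‖x ω‖ ∂P :=
        integral_mono (integrable_matVec hB hBint hx).norm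
          ((memLp_frob hB hBint).integrable_mul hx.norm) fun ω => norm_matVec_le _ _
    _ ≤ √(∫ ω, frob (B ω) ^ 2 ∂P) * √(∫ ω, ‖x ω‖ ^ 2 ∂P) :=
        integral_mul_le_sqrt_mul_sqrt (memLp_frob hB hBint) hx.norm
          (fun _ => Real.sqrt_nonneg _) fun _ => norm_nonneg _
    _ = √(∫ ω, frobSq (B ω) ∂P) * √(∫ ω, ‖x ω‖ ^ 2 ∂P) := by simp only [frob_sq]

lemma integrable_inner_matVec_of_ae_frob_le {A : Ω → Matrix (Fin n) (Fin m) ℝ} {C : ℝ}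
    {x : Ω → EuclideanSpace ℝ (Fin m)} {y : Ω → EuclideanSpace ℝ (Fin n)}
    (hA : AEStronglyMeasurable A P) (hC : ∀ᵐ ω ∂P, frob (A ω) ≤ C) (hx : MemLp x 2 P)
    (hy : MemLp y 2 P) : Integrable (fun ω => ⟪matVec (A ω) (x ω), y ω⟫) P := by
  refine ((hx.norm.integrable_mul hy.norm).const_mul C).mono'
    ((hA.matVec hx.aestronglyMeasurable).inner hy.aestronglyMeasurable) ?_
  filter_upwards [hC] with ω hω
  calc ‖⟪matVec (A ω) (x ω), y ω⟫‖ ≤ ‖matVec (A ω) (x ω)‖ * ‖y ω‖ := norm_inner_le_norm _ _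
    _ ≤ frob (A ω) * ‖x ω‖ * ‖y ω‖ := by gcongr; exact norm_matVec_le _ _
    _ ≤ C * (‖x ω‖ * ‖y ω‖) := by rw [← mul_assoc]; gcongr

end Integration

/-- `∑ₖ E|Bₖ|² < ∞`, together with the measurability and integrability it presupposes. -/
structure SummableSecondMoments {Ω : Type*} [MeasurableSpace Ω] {n m : ℕ} (P : Measure Ω)
    (B : ℕ → Ω → Matrix (Fin n) (Fin m) ℝ) : Prop where
  aestronglyMeasurable : ∀ k, AEStronglyMeasurable (B k) P
  integrable_frobSq : ∀ k, Integrable (fun ω => frobSq (B k ω)) P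
  summable_integral_frobSq : Summable fun k => ∫ ω, frobSq (B k ω) ∂P

namespace SummableSecondMoments

variable {Ω : Type*} [MeasurableSpace Ω] {P : Measure Ω} {n m : ℕ}
  {B : ℕ → Ω → Matrix (Fin n) (Fin m) ℝ}

lemma transpose (hB : SummableSecondMoments P B) :
    SummableSecondMoments P fun k ω => (B k ω)ᵀ where
  aestronglyMeasurable k := continuous_id.matrix_transpose.comp_aestronglyMeasurable
    (hB.aestronglyMeasurable k)
  integrable_frobSq := by simpa only [frobSq_transpose] using hB.integrable_frobSq
  summable_integral_frobSq := by simpa only [frobSq_transpose] using hB.summable_integral_frobSq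

lemma summable_sq_norm_integral_matVec (hB : SummableSecondMoments P B)
    {x : Ω → EuclideanSpace ℝ (Fin m)} (hx : MemLp x 2 P) :
    Summable fun k => ‖∫ ω, matVec (B k ω) (x ω) ∂P‖ ^ 2 := by
  refine Summable.of_nonneg_of_le (fun k => sq_nonneg _) (fun k => ?_)
    (hB.summable_integral_frobSq.mul_right (∫ ω, ‖x ω‖ ^ 2 ∂P))
  calc ‖∫ ω, matVec (B k ω) (x ω) ∂P‖ ^ 2
      ≤ (√(∫ ω, frobSq (B k ω) ∂P) * √(∫ ω, ‖x ω‖ ^ 2 ∂P)) ^ 2 := by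
        gcongr
        exact (norm_integral_le_integral_norm _).trans
          (integral_norm_matVec_le (hB.aestronglyMeasurable k) (hB.integrable_frobSq k) hx)
    _ = (∫ ω, frobSq (B k ω) ∂P) * ∫ ω, ‖x ω‖ ^ 2 ∂P := by
        rw [mul_pow, Real.sq_sqrt (integral_nonneg fun _ => frobSq_nonneg _),
          Real.sq_sqrt (integral_nonneg fun _ => sq_nonneg _)]

lemma ae_summable_matVec (hB : SummableSecondMoments P B) {c : ℕ → EuclideanSpace ℝ (Fin m)}
    (hc : Summable fun k => ‖c k‖ ^ 2) : ∀ᵐ ω ∂P, Summable fun k => matVec (B k ω) (c k) := by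
  filter_upwards [(ae_summable_and_integrable_tsum (fun _ _ => frobSq_nonneg _)
    hB.integrable_frobSq hB.summable_integral_frobSq).1] with ω hω
  exact Summable.of_norm_bounded
    (summable_mul_of_summable_sq (hω.congr fun k => (frob_sq _).symm) hc)
    fun k => norm_matVec_le _ _

lemma summable_integral_norm_inner_matVec (hB : SummableSecondMoments P B)
    {c : ℕ → EuclideanSpace ℝ (Fin n)} (hc : Summable fun k => ‖c k‖ ^ 2)
    {y : Ω → EuclideanSpace ℝ (Fin m)} (hy : MemLp y 2 P) :
    Summable fun k => ∫ ω, ‖⟪c k, matVec (B k ω) (y ω)⟫‖ ∂P := by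
  have hBy : ∀ k, Integrable (fun ω => matVec (B k ω) (y ω)) P := fun k =>
    integrable_matVec (hB.aestronglyMeasurable k) (hB.integrable_frobSq k) hy
  have hβ : Summable fun k => √(∫ ω, frobSq (B k ω) ∂P) ^ 2 := by
    simpa only [Real.sq_sqrt (integral_nonneg fun _ => frobSq_nonneg _)]
      using hB.summable_integral_frobSq
  refine Summable.of_nonneg_of_le (fun k => integral_nonneg fun _ => norm_nonneg _)
    (fun k => ?_) ((summable_mul_of_summable_sq (a := fun k => ‖c k‖) hc hβ).mul_right
      √(∫ ω, ‖y ω‖ ^ 2 ∂P))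
  calc ∫ ω, ‖⟪c k, matVec (B k ω) (y ω)⟫‖ ∂P
      ≤ ∫ ω, ‖c k‖ * ‖matVec (B k ω) (y ω)‖ ∂P :=
        integral_mono ((hBy k).const_inner (c k)).norm ((hBy k).norm.const_mul _)
          fun _ => norm_inner_le_norm _ _
    _ ≤ ‖c k‖ * (√(∫ ω, frobSq (B k ω) ∂P) * √(∫ ω, ‖y ω‖ ^ 2 ∂P)) := by
        rw [integral_const_mul]
        gcongr
        exact integral_norm_matVec_le (hB.aestronglyMeasurable k) (hB.integrable_frobSq k) hy
    _ = ‖c k‖ * √(∫ ω, frobSq (B k ω) ∂P) * √(∫ ω, ‖y ω‖ ^ 2 ∂P) := (mul_assoc _ _ _).symm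

theorem integral_inner_tsum_matVec (hB : SummableSecondMoments P B)
    {c : ℕ → EuclideanSpace ℝ (Fin m)} (hc : Summable fun k => ‖c k‖ ^ 2)
    {y : Ω → EuclideanSpace ℝ (Fin n)} (hy : MemLp y 2 P) :
    Integrable (fun ω => ⟪y ω, ∑' k, matVec (B k ω) (c k)⟫) P ∧
      ∫ ω, ⟪y ω, ∑' k, matVec (B k ω) (c k)⟫ ∂P =
        ∑' k, ⟪c k, ∫ ω, matVec (B k ω)ᵀ (y ω) ∂P⟫ := by
  have hBt := hB.transpose
  have hBty : ∀ k, Integrable (fun ω => matVec (B k ω)ᵀ (y ω)) P := fun k =>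
    integrable_matVec (hBt.aestronglyMeasurable k) (hBt.integrable_frobSq k) hy
  have hlim : ∀ᵐ ω ∂P, HasSum (fun k => ⟪c k, matVec (B k ω)ᵀ (y ω)⟫)
      ⟪y ω, ∑' k, matVec (B k ω) (c k)⟫ := by
    filter_upwards [hB.ae_summable_matVec hc] with ω hω
    simpa only [innerSL_apply_apply, ← real_inner_comm (y ω), inner_matVec]
      using hω.hasSum.mapL (innerSL ℝ (y ω))
  obtain ⟨hint, hsum⟩ := integrable_and_hasSum_integral_of_ae_hasSum
    (fun k => (hBty k).const_inner (c k)) (hBt.summable_integral_norm_inner_matVec hc hy) hlim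
  exact ⟨hint, hsum.tsum_eq.symm.trans (tsum_congr fun k => integral_inner (hBty k) (c k))⟩

theorem integral_tsum_matVec_inner (hB : SummableSecondMoments P B)
    {c : ℕ → EuclideanSpace ℝ (Fin m)} (hc : Summable fun k => ‖c k‖ ^ 2)
    {y : Ω → EuclideanSpace ℝ (Fin n)} (hy : MemLp y 2 P) :
    Integrable (fun ω => ⟪∑' k, matVec (B k ω) (c k), y ω⟫) P ∧
      ∫ ω, ⟪∑' k, matVec (B k ω) (c k), y ω⟫ ∂P =
        ∑' k, ⟪∫ ω, matVec (B k ω)ᵀ (y ω) ∂P, c k⟫ := by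
  obtain ⟨hint, heq⟩ := hB.integral_inner_tsum_matVec hc hy
  exact ⟨hint.congr (ae_of_all _ fun _ => real_inner_comm _ _),
    (integral_congr_ae (ae_of_all _ fun _ => real_inner_comm _ _)).trans
      (heq.trans (tsum_congr fun _ => real_inner_comm _ _))⟩

end SummableSecondMoments

theorem meanField_operator_adjoint_general
    (n : ℕ) {Ω : Type*} [MeasurableSpace Ω] (P : Measure Ω)
    (A : Ω → Matrix (Fin n) (Fin n) ℝ)
    (Abar Atil : ℕ → Ω → Matrix (Fin n) (Fin n) ℝ)
    (hAmeas : ∀ i j, Measurable fun ω => A ω i j)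
    (hAbdd : ∃ C : ℝ, ∀ᵐ ω ∂P, frob (A ω) ≤ C)
    (hAbarMeas : ∀ k i j, Measurable fun ω => Abar k ω i j)
    (hAtilMeas : ∀ k i j, Measurable fun ω => Atil k ω i j)
    (hAbarInt : ∀ k, Integrable (fun ω => frobSq (Abar k ω)) P)
    (hAtilInt : ∀ k, Integrable (fun ω => frobSq (Atil k ω)) P)
    (hAbarSum : Summable fun k => ∫ ω, frobSq (Abar k ω) ∂P)
    (hAtilSum : Summable fun k => ∫ ω, frobSq (Atil k ω) ∂P) :
    ∀ ξ y : Ω → EuclideanSpace ℝ (Fin n), MemLp ξ 2 P → MemLp y 2 P →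
      ∫ ω, ⟪matVec (A ω) (ξ ω) +
          ∑' k, matVec (Abar k ω) (∫ ω', matVec (Atil k ω') (ξ ω') ∂P), y ω⟫ ∂P =
      ∫ ω, ⟪ξ ω, matVec (A ω).transpose (y ω) +
          ∑' k, matVec (Atil k ω).transpose
            (∫ ω', matVec (Abar k ω').transpose (y ω') ∂P)⟫ ∂P := by
  intro ξ y hξ hy
  obtain ⟨C, hC⟩ := hAbdd
  have hAbar : SummableSecondMoments P Abar :=
    ⟨fun k => aestronglyMeasurable_of_measurable_entries (hAbarMeas k), hAbarInt, hAbarSum⟩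
  have hAtil : SummableSecondMoments P Atil :=
    ⟨fun k => aestronglyMeasurable_of_measurable_entries (hAtilMeas k), hAtilInt, hAtilSum⟩
  have hAξy := integrable_inner_matVec_of_ae_frob_le
    (aestronglyMeasurable_of_measurable_entries hAmeas) hC hξ hy
  obtain ⟨hL_int, hL⟩ := hAbar.integral_tsum_matVec_inner
    (hAtil.summable_sq_norm_integral_matVec hξ) hy
  obtain ⟨hR_int, hR⟩ := hAtil.transpose.integral_inner_tsum_matVec
    (hAbar.transpose.summable_sq_norm_integral_matVec hy) hξ
  simp only [Matrix.transpose_transpose] at hR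
  simp_rw [inner_add_left, inner_add_right, ← inner_matVec]
  rw [integral_add hAξy hL_int, integral_add hAξy hR_int, hL, hR]

/-- The Hilbert-space adjoint of the mean-field operator
`𝒜ξ = Aξ + ∑ₖ Āₖ E[Ãₖ ξ]` on `L²(Ω; ℝⁿ)` is given by
`𝒜*y = Aᵀy + ∑ₖ Ãₖᵀ E[Āₖᵀ y]`, i.e. `E[⟨𝒜ξ, y⟩] = E[⟨ξ, 𝒜*y⟩]`
for all `ξ, y ∈ L²(Ω; ℝⁿ)`. -/
theorem meanField_operator_adjoint
    (n : ℕ) {Ω : Type*} [MeasurableSpace Ω] (P : Measure Ω) [IsProbabilityMeasure P]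
    (A : Ω → Matrix (Fin n) (Fin n) ℝ)
    (Abar Atil : ℕ → Ω → Matrix (Fin n) (Fin n) ℝ)
    (hAmeas : ∀ i j, Measurable fun ω => A ω i j)
    (hAbdd : ∃ C : ℝ, ∀ᵐ ω ∂P, frob (A ω) ≤ C)
    (hAbarMeas : ∀ k i j, Measurable fun ω => Abar k ω i j)
    (hAtilMeas : ∀ k i j, Measurable fun ω => Atil k ω i j)
    (hAbarInt : ∀ k, Integrable (fun ω => frobSq (Abar k ω)) P)
    (hAtilInt : ∀ k, Integrable (fun ω => frobSq (Atil k ω)) P)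
    (hAbarSum : Summable fun k => ∫ ω, frobSq (Abar k ω) ∂P)
    (hAtilSum : Summable fun k => ∫ ω, frobSq (Atil k ω) ∂P) :
    ∀ ξ y : Ω → EuclideanSpace ℝ (Fin n), MemLp ξ 2 P → MemLp y 2 P →
      ∫ ω, ⟪matVec (A ω) (ξ ω) +
          ∑' k, matVec (Abar k ω) (∫ ω', matVec (Atil k ω') (ξ ω') ∂P), y ω⟫ ∂P =
      ∫ ω, ⟪ξ ω, matVec (A ω).transpose (y ω) +
          ∑' k, matVec (Atil k ω).transpose
            (∫ ω', matVec (Abar k ω').transpose (y ω') ∂P)⟫ ∂P :=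
  meanField_operator_adjoint_general n P A Abar Atil hAmeas hAbdd hAbarMeas hAtilMeas hAbarInt
    hAtilInt hAbarSum hAtilSum
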